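/- Cut existence (fullness for small families): for any small index types ι and κ and any families l : ι → Surreal and u : κ → Surreal such that l i < u j for all i : ι and j : κ, there exists a surreal number z with l i < z for all i and z < u j for all j. -/

import Mathlib

universe u

namespace SetTheory

/-- Pre-games, as formerly in Mathlib (`SetTheory.PGame`). -/
inductive PGame : Type (u + 1)
  | mk : ∀ α β : Type u, (α → PGame) → (β → PGame) → PGame

namespace PGame

def LeftMoves : PGame.{u} → Type u
  | mk l _ _ _ => l

def RightMoves : PGame.{u} → Type u
  | mk _ r _ _ => r

def moveLeft : ∀ g : PGame.{u}, LeftMoves g → PGame.{u}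
  | mk _ _ L _ => L

def moveRight : ∀ g : PGame.{u}, RightMoves g → PGame.{u}
  | mk _ _ _ R => R

mutual
/-- `x ≤ y` for pre-games: no left option of `x` is `≥ y` and no right option of `y` is `≤ x`. -/
inductive LE' : PGame.{u} → PGame.{u} → Prop
  | intro (x y : PGame.{u}) :
      (∀ i, LF' (x.moveLeft i) y) → (∀ j, LF' x (y.moveRight j)) → LE' x y
/-- `x ⧏ y` for pre-games (equivalently `¬ y ≤ x`). -/
inductive LF' : PGame.{u} → PGame.{u} → Prop
  | ofLeft (x y : PGame.{u}) (i : y.LeftMoves) : LE' x (y.moveLeft i) → LF' x y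
  | ofRight (x y : PGame.{u}) (j : x.RightMoves) : LE' (x.moveRight j) y → LF' x y
end

/-- `x < y` for pre-games, as in Mathlib's preorder: `x ≤ y ∧ x ⧏ y`. -/
def Lt' (x y : PGame.{u}) : Prop := LE' x y ∧ LF' x y

def Numeric : PGame.{u} → Prop
  | ⟨_, _, L, R⟩ => (∀ i j, Lt' (L i) (R j)) ∧ (∀ i, Numeric (L i)) ∧ ∀ j, Numeric (R j)

end PGame

end SetTheory

/-- Surreal numbers: numeric pre-games modulo `x ≤ y ∧ y ≤ x`. -/
def Surreal : Type (u + 1) :=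
  Quot (fun x y : {x : SetTheory.PGame.{u} // SetTheory.PGame.Numeric x} =>
    SetTheory.PGame.LE' x.1 y.1 ∧ SetTheory.PGame.LE' y.1 x.1)

/-- The order on surreals, read on representatives (well defined, as in old Mathlib). -/
instance : LT Surreal.{u} :=
  ⟨fun a b => ∃ x y, Quot.mk _ x = a ∧ Quot.mk _ y = b ∧ SetTheory.PGame.Lt' x.1 y.1⟩

/-! The cut is filled by the pre-game `{L | R}` whose left options are representatives of the
`l i` and whose right options are representatives of the `u j`. It is numeric because its
options are and every left option lies below every right one; and a numeric game lies strictly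
between its left and its right options. -/

open SetTheory PGame

namespace SetTheory.PGame

theorem le'_iff {x y : PGame.{u}} :
    LE' x y ↔ (∀ i, LF' (x.moveLeft i) y) ∧ ∀ j, LF' x (y.moveRight j) :=
  ⟨fun h => by cases h with | intro _ _ hL hR => exact ⟨hL, hR⟩, fun h => .intro _ _ h.1 h.2⟩

theorem lf'_iff {x y : PGame.{u}} :
    LF' x y ↔ (∃ i, LE' x (y.moveLeft i)) ∨ ∃ j, LE' (x.moveRight j) y := by
  constructor
  · rintro (⟨_, _, i, h⟩ | ⟨_, _, j, h⟩)
    exacts [.inl ⟨i, h⟩, .inr ⟨j, h⟩]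
  · rintro (⟨i, h⟩ | ⟨j, h⟩)
    exacts [.ofLeft _ _ i h, .ofRight _ _ j h]

theorem LE'.moveLeft_lf' {x y : PGame.{u}} (h : LE' x y) (i : x.LeftMoves) :
    LF' (x.moveLeft i) y :=
  (le'_iff.1 h).1 i

theorem LE'.lf'_moveRight {x y : PGame.{u}} (h : LE' x y) (j : y.RightMoves) :
    LF' x (y.moveRight j) :=
  (le'_iff.1 h).2 j

theorem LE'.refl (x : PGame.{u}) : LE' x x := by
  induction x with
  | mk _ _ _ _ ihL ihR =>
    exact .intro _ _ (fun i => .ofLeft _ _ i (ihL i)) (fun j => .ofRight _ _ j (ihR j))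

/-- Both orientations at once, so that the induction hypothesis is available for the swapped
pairs `(y, x.moveLeft i)` and `(y.moveRight j, x)`. -/
theorem not_le'_iff_lf'_and_symm (x y : PGame.{u}) :
    (¬LE' x y ↔ LF' y x) ∧ (¬LE' y x ↔ LF' x y) := by
  induction x generalizing y with
  | mk _ _ _ _ ihL ihR =>
    induction y with
    | mk _ _ _ _ ihL' ihR' =>
      rw [le'_iff, le'_iff, lf'_iff, lf'_iff, not_and_or, not_and_or]
      simp only [not_forall]
      exact ⟨or_congr (exists_congr fun i => not_iff_comm.1 (ihL i _).2)
          (exists_congr fun j => not_iff_comm.1 (ihR' j).2),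
        or_congr (exists_congr fun k => not_iff_comm.1 (ihL' k).1)
          (exists_congr fun m => not_iff_comm.1 (ihR m _).1)⟩

theorem not_le'_iff_lf' {x y : PGame.{u}} : ¬LE' x y ↔ LF' y x :=
  (not_le'_iff_lf'_and_symm x y).1

theorem LF'.not_le' {x y : PGame.{u}} (h : LF' x y) : ¬LE' y x :=
  not_le'_iff_lf'.2 h

theorem le'_trans_of_options {x y z : PGame.{u}}
    (h₁ : ∀ i, LE' y z → LE' z (x.moveLeft i) → LE' y (x.moveLeft i))
    (h₂ : ∀ j, LE' (z.moveRight j) x → LE' x y → LE' (z.moveRight j) y)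
    (hxy : LE' x y) (hyz : LE' y z) : LE' x z :=
  .intro _ _
    (fun i => not_le'_iff_lf'.1 fun hzx => (hxy.moveLeft_lf' i).not_le' (h₁ i hyz hzx))
    (fun j => not_le'_iff_lf'.1 fun hzx => (hyz.lf'_moveRight j).not_le' (h₂ j hzx hxy))

/-- Transitivity in all three cyclic orders, so that each can use the others on options. -/
theorem le'_trans_cyclic (x y z : PGame.{u}) :
    (LE' x y → LE' y z → LE' x z) ∧ (LE' y z → LE' z x → LE' y x) ∧
      (LE' z x → LE' x y → LE' z y) := by
  induction x generalizing y z with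
  | mk _ _ _ _ ihL ihR =>
    induction y generalizing z with
    | mk _ _ _ _ ihL' ihR' =>
      induction z with
      | mk _ _ _ _ ihL'' ihR'' =>
        exact ⟨le'_trans_of_options (fun i => (ihL i _ _).2.1) (fun j => (ihR'' j).2.2),
          le'_trans_of_options (fun k => (ihL' k _).2.2) (fun m => (ihR m _ _).1),
          le'_trans_of_options (fun k => (ihL'' k).1) (fun m => (ihR' m _).2.1)⟩

theorem LE'.trans {x y z : PGame.{u}} (hxy : LE' x y) (hyz : LE' y z) : LE' x z :=
  (le'_trans_cyclic x y z).1 hxy hyz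

theorem LE'.trans_lf' {x y z : PGame.{u}} (hxy : LE' x y) (hyz : LF' y z) : LF' x z :=
  not_le'_iff_lf'.1 fun hzx => hyz.not_le' (hzx.trans hxy)

theorem LF'.trans_le' {x y z : PGame.{u}} (hxy : LF' x y) (hyz : LE' y z) : LF' x z :=
  not_le'_iff_lf'.1 fun hzx => hxy.not_le' (hyz.trans hzx)

theorem LE'.trans_lt' {x y z : PGame.{u}} (hxy : LE' x y) (hyz : Lt' y z) : Lt' x z :=
  ⟨hxy.trans hyz.1, hxy.trans_lf' hyz.2⟩

theorem Lt'.trans_le' {x y z : PGame.{u}} (hxy : Lt' x y) (hyz : LE' y z) : Lt' x z :=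
  ⟨hxy.1.trans hyz, hxy.2.trans_le' hyz⟩

theorem Numeric.moveLeft_lt' {x : PGame.{u}} (hx : Numeric x) (i : x.LeftMoves) :
    Lt' (x.moveLeft i) x := by
  induction x with
  | mk _ _ _ _ ihL _ =>
    obtain ⟨hLR, hL, _⟩ := hx
    exact ⟨.intro _ _ (fun k => .ofLeft _ _ i (ihL i (hL i) k).1) (fun j => (hLR i j).2),
      .ofLeft _ _ i (.refl _)⟩

theorem Numeric.lt'_moveRight {x : PGame.{u}} (hx : Numeric x) (j : x.RightMoves) :
    Lt' x (x.moveRight j) := by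
  induction x with
  | mk _ _ _ _ _ ihR =>
    obtain ⟨hLR, _, hR⟩ := hx
    exact ⟨.intro _ _ (fun i => (hLR i j).2) (fun m => .ofRight _ _ j (ihR j (hR j) m).1),
      .ofRight _ _ j (.refl _)⟩

end SetTheory.PGame

namespace Surreal

theorem equivalence_le'_and_le' :
    Equivalence fun x y : {x : PGame.{u} // Numeric x} => LE' x.1 y.1 ∧ LE' y.1 x.1 :=
  ⟨fun _ => ⟨.refl _, .refl _⟩, fun h => ⟨h.2, h.1⟩,
    fun hxy hyz => ⟨hxy.1.trans hyz.1, hyz.2.trans hxy.2⟩⟩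

theorem le'_and_le'_of_mk_eq {x y : {x : PGame.{u} // Numeric x}}
    (h : (Quot.mk _ x : Surreal.{u}) = Quot.mk _ y) : LE' x.1 y.1 ∧ LE' y.1 x.1 :=
  equivalence_le'_and_le'.eqvGen_iff.1 (Quot.eqvGen_exact h)

theorem lt_of_lt' {a b : Surreal.{u}} {x y : {x : PGame.{u} // Numeric x}}
    (ha : Quot.mk _ x = a) (hb : Quot.mk _ y = b) (h : Lt' x.1 y.1) : a < b :=
  Exists.intro x ⟨y, ha, hb, h⟩

theorem lt'_out_of_lt {a b : Surreal.{u}} (h : a < b) : Lt' (Quot.out a).1 (Quot.out b).1 := by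
  obtain ⟨x, y, rfl, rfl, hxy⟩ := h
  exact ((le'_and_le'_of_mk_eq (Quot.out_eq _)).1.trans_lt' hxy).trans_le'
    (le'_and_le'_of_mk_eq (Quot.out_eq _)).2

end Surreal

theorem surreal_cut_exists {ι κ : Type u} (l : ι → Surreal.{u}) (u : κ → Surreal.{u})
    (h : ∀ (i : ι) (j : κ), l i < u j) :
    ∃ z : Surreal.{u}, (∀ i, l i < z) ∧ (∀ j, z < u j) := by
  let z : PGame.{u} := .mk ι κ (fun i => (Quot.out (l i)).1) (fun j => (Quot.out (u j)).1)
  have hz : Numeric z :=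
    ⟨fun i j => Surreal.lt'_out_of_lt (h i j), fun i => (Quot.out (l i)).2,
      fun j => (Quot.out (u j)).2⟩
  exact ⟨Quot.mk _ ⟨z, hz⟩, fun i => Surreal.lt_of_lt' (Quot.out_eq _) rfl (hz.moveLeft_lt' i),
    fun j => Surreal.lt_of_lt' rfl (Quot.out_eq _) (hz.lt'_moveRight j)⟩
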